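/- Fix a bijective enumeration (q_i)_{i≥1} of the rational numbers in (0,1) and let f(x) = Σ_{i : q_i < x} 2^{−i} for x ∈ [0,1]. Let k ≥ 1 and let G₁,…,G_k : [0,1] → ℝ be continuous functions that are real-analytic on (0,1), with G_k not identically zero. Then g = Σ_{j=1}^k G_j · f^j has a dense set of jump discontinuities: for every 0 ≤ a < b ≤ 1 there exists x ∈ (a,b) at which both one-sided limits of g exist and are distinct. -/

import Mathlib

open Set Filter Topology

/-- `jumpF q x = Σ_{i : q i < x} 2^{-i}`, where `(q_i)_{i ≥ 1}` is an enumeration of the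
rationals of `(0,1)`. -/
noncomputable def jumpF (q : ℕ+ → ℝ) (x : ℝ) : ℝ :=
  ∑' i : ℕ+, if q i < x then (1 / 2 : ℝ) ^ (i : ℕ) else 0

/-- `h` has a jump discontinuity at `x`: both one-sided limits exist and are distinct. -/
def HasJumpAt (h : ℝ → ℝ) (x : ℝ) : Prop :=
  ∃ L R : ℝ, Filter.Tendsto h (𝓝[<] x) (𝓝 L) ∧
    Filter.Tendsto h (𝓝[>] x) (𝓝 R) ∧ L ≠ R

namespace Stmt13Aux

variable {q : ℕ+ → ℝ}






noncomputable def w (i : ℕ+) : ℝ := (1 / 2 : ℝ) ^ (i : ℕ)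

lemma w_pos (i : ℕ+) : 0 < w i := by
  unfold w; positivity

lemma summable_w : Summable w :=
  summable_geometric_two.comp_injective (fun a b h => PNat.coe_injective h)

variable {q : ℕ+ → ℝ}

lemma summable_ite (p : ℕ+ → Prop) [DecidablePred p] :
    Summable (fun i => if p i then w i else 0) := by
  apply Summable.of_nonneg_of_le (g := fun i => if p i then w i else 0) (f := w)
  · intro i; split_ifs; exacts [(w_pos i).le, le_rfl]
  · intro i; split_ifs; exacts [le_rfl, (w_pos i).le]
  · exact summable_w

noncomputable def jumpFc (q : ℕ+ → ℝ) (x : ℝ) : ℝ :=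
  ∑' i : ℕ+, if q i ≤ x then w i else 0

lemma jumpF_def (x : ℝ) : jumpF q x = ∑' i : ℕ+, if q i < x then w i else 0 := rfl

lemma jumpF_mono : Monotone (jumpF q) := by
  intro x y hxy
  rw [jumpF_def, jumpF_def]
  apply Summable.tsum_le_tsum _ (summable_ite _) (summable_ite _)
  intro i
  split_ifs with h1 h2
  · exact le_rfl
  · exact absurd (lt_of_lt_of_le h1 hxy) h2
  · exact (w_pos i).le
  · exact le_rfl

lemma jumpF_le_jumpFc_self (x : ℝ) : jumpF q x ≤ jumpFc q x := by
  rw [jumpF_def]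
  apply Summable.tsum_le_tsum _ (summable_ite _) (summable_ite _)
  intro i
  split_ifs with h1 h2
  · exact le_rfl
  · exact absurd h1.le h2
  · exact (w_pos i).le
  · exact le_rfl

lemma jumpFc_le_jumpF {x y : ℝ} (hxy : x < y) : jumpFc q x ≤ jumpF q y := by
  rw [jumpF_def]
  apply Summable.tsum_le_tsum _ (summable_ite _) (summable_ite _)
  intro i
  split_ifs with h1 h2
  · exact le_rfl
  · exact absurd (lt_of_le_of_lt h1 hxy) h2
  · exact (w_pos i).le
  · exact le_rfl

lemma left_approx (x : ℝ) {ε : ℝ} (hε : 0 < ε) :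
    ∃ y < x, jumpF q x - ε < jumpF q y := by
  classical
  have hsum : HasSum (fun i => if q i < x then w i else 0) (jumpF q x) :=
    (summable_ite _).hasSum
  have hev : ∀ᶠ F : Finset ℕ+ in atTop,
      jumpF q x - ε < ∑ i ∈ F, (if q i < x then w i else 0) :=
    hsum.eventually (eventually_gt_nhds (by linarith))
  obtain ⟨F, hF⟩ := hev.exists
  set T := F.filter (fun i => q i < x) with hT
  have hsumT : ∑ i ∈ F, (if q i < x then w i else 0) = ∑ i ∈ T, w i :=
    (Finset.sum_filter _ _).symm
  obtain ⟨y, hyx, hy⟩ : ∃ y < x, ∀ i ∈ T, q i < y := by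
    rcases T.eq_empty_or_nonempty with h | h
    · exact ⟨x - 1, by linarith, by simp [h]⟩
    · refine ⟨(T.sup' h q + x) / 2, ?_, ?_⟩
      · have : T.sup' h q < x := (Finset.sup'_lt_iff h).2 (fun i hi => by
          simp only [hT, Finset.mem_filter] at hi; exact hi.2)
        linarith
      · intro i hi
        have h1 : q i ≤ T.sup' h q := Finset.le_sup' q hi
        have h2 : T.sup' h q < x := (Finset.sup'_lt_iff h).2 (fun i hi => by
          simp only [hT, Finset.mem_filter] at hi; exact hi.2)
        have := Finset.le_sup' q hi
        linarith
  refine ⟨y, hyx, ?_⟩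
  have h1 : ∑ i ∈ T, w i ≤ jumpF q y := by
    rw [jumpF_def]
    have : ∑ i ∈ T, w i = ∑ i ∈ T, (if q i < y then w i else 0) := by
      apply Finset.sum_congr rfl
      intro i hi
      rw [if_pos (hy i hi)]
    rw [this]
    exact Summable.sum_le_tsum T (fun i _ => by split_ifs; exacts [(w_pos i).le, le_rfl])
      (summable_ite _)
  calc jumpF q x - ε < ∑ i ∈ T, w i := by rw [← hsumT]; exact hF
    _ ≤ jumpF q y := h1

lemma tendsto_left (x : ℝ) : Tendsto (jumpF q) (𝓝[<] x) (𝓝 (jumpF q x)) := by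
  have h := (jumpF_mono (q := q)).tendsto_nhdsLT x
  have hbdd : BddAbove (jumpF q '' Iio x) := by
    refine ⟨jumpF q x, ?_⟩
    rintro z ⟨y, hy, rfl⟩
    exact jumpF_mono hy.le
  have hne : (jumpF q '' Iio x).Nonempty := ⟨jumpF q (x - 1), ⟨x - 1, by simp, rfl⟩⟩
  have hsup : sSup (jumpF q '' Iio x) = jumpF q x := by
    apply le_antisymm
    · apply csSup_le hne
      rintro z ⟨y, hy, rfl⟩
      exact jumpF_mono hy.le
    · by_contra hlt
      push_neg at hlt
      obtain ⟨y, hyx, hy⟩ := left_approx (q := q) x (sub_pos.2 hlt)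
      have : jumpF q y ≤ sSup (jumpF q '' Iio x) := le_csSup hbdd ⟨y, hyx, rfl⟩
      linarith
  rwa [hsup] at h






lemma jumpFc_def (x : ℝ) : jumpFc q x = ∑' i : ℕ+, if q i ≤ x then w i else 0 := rfl

lemma right_approx (x : ℝ) {ε : ℝ} (hε : 0 < ε) :
    ∃ y > x, jumpF q y < jumpFc q x + ε := by
  classical
  have htail : ∀ᶠ F : Finset ℕ+ in atTop, ∑' i : {i // i ∉ F}, w i < ε := by
    have := tendsto_tsum_compl_atTop_zero w
    exact (tendsto_order.1 this).2 _ hε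
  obtain ⟨F, hF⟩ := htail.exists
  obtain ⟨y, hyx, hy⟩ : ∃ y > x, ∀ i ∈ F, x < q i → y ≤ q i := by
    set F' := F.filter (fun i => x < q i) with hF'
    rcases F'.eq_empty_or_nonempty with h | h
    · refine ⟨x + 1, by linarith, fun i hi hqi => ?_⟩
      exfalso
      have : i ∈ F' := by rw [hF']; exact Finset.mem_filter.2 ⟨hi, hqi⟩
      simp [h] at this
    · have hm : x < F'.inf' h q := (Finset.lt_inf'_iff h).2 (fun i hi => by
        simp only [hF', Finset.mem_filter] at hi; exact hi.2)
      refine ⟨(x + F'.inf' h q) / 2, by linarith, fun i hi hqi => ?_⟩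
      have : F'.inf' h q ≤ q i := Finset.inf'_le q (by rw [hF']; exact Finset.mem_filter.2 ⟨hi, hqi⟩)
      linarith
  refine ⟨y, hyx, ?_⟩
  have hsplit : jumpF q y = (∑ i ∈ F, (if q i < y then w i else 0))
      + ∑' i : {i // i ∉ F}, (if q (i : ℕ+) < y then w (i : ℕ+) else 0) := by
    rw [jumpF_def]
    exact (Summable.sum_add_tsum_compl (summable_ite _)).symm
  have h1 : ∑ i ∈ F, (if q i < y then w i else 0)
      ≤ ∑ i ∈ F, (if q i ≤ x then w i else 0) := by
    apply Finset.sum_le_sum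
    intro i hi
    split_ifs with ha hb
    · exact le_rfl
    · exfalso
      rcases lt_or_ge x (q i) with hc | hc
      · exact absurd (hy i hi hc) (not_le.2 ha)
      · exact hb hc
    · exact (w_pos i).le
    · exact le_rfl
  have h2 : ∑ i ∈ F, (if q i ≤ x then w i else 0) ≤ jumpFc q x :=
    Summable.sum_le_tsum F (fun i _ => by split_ifs; exacts [(w_pos i).le, le_rfl]) (summable_ite _)
  have h3 : ∑' i : {i // i ∉ F}, (if q (i : ℕ+) < y then w (i : ℕ+) else 0)
      ≤ ∑' i : {i // i ∉ F}, w (i : ℕ+) := by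
    apply Summable.tsum_le_tsum _ ((summable_ite (fun i => q i < y)).subtype _)
      (summable_w.subtype _)
    intro i
    simp only [Function.comp_apply]
    split_ifs
    · exact le_rfl
    · exact (w_pos _).le
  have h4 : jumpF q y ≤ ∑ i ∈ F, (if q i ≤ x then w i else 0)
      + ∑' i : {i // i ∉ F}, w (i : ℕ+) := by
    rw [hsplit]; exact add_le_add h1 h3
  linarith

lemma tendsto_right (x : ℝ) : Tendsto (jumpF q) (𝓝[>] x) (𝓝 (jumpFc q x)) := by
  have h := (jumpF_mono (q := q)).tendsto_nhdsGT x
  have hbdd : BddBelow (jumpF q '' Ioi x) := by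
    refine ⟨jumpFc q x, ?_⟩
    rintro z ⟨y, hy, rfl⟩
    exact jumpFc_le_jumpF hy
  have hne : (jumpF q '' Ioi x).Nonempty := ⟨jumpF q (x + 1), ⟨x + 1, by simp, rfl⟩⟩
  have hinf : sInf (jumpF q '' Ioi x) = jumpFc q x := by
    apply le_antisymm
    · by_contra hlt
      push_neg at hlt
      obtain ⟨y, hyx, hy⟩ := right_approx (q := q) x (sub_pos.2 hlt)
      have : sInf (jumpF q '' Ioi x) ≤ jumpF q y := csInf_le hbdd ⟨y, hyx, rfl⟩
      linarith
    · apply le_csInf hne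
      rintro z ⟨y, hy, rfl⟩
      exact jumpFc_le_jumpF hy
  rwa [hinf] at h

lemma jumpFc_eq_of_not_mem {x : ℝ} (hx : x ∉ range q) : jumpFc q x = jumpF q x := by
  rw [jumpF_def, jumpFc_def]
  apply tsum_congr
  intro i
  have : q i ≠ x := fun h => hx ⟨i, h⟩
  rcases lt_or_ge (q i) x with h | h
  · rw [if_pos h.le, if_pos h]
  · rw [if_neg (by intro hc; exact this (le_antisymm hc h)),
      if_neg (by intro hc; exact absurd (le_of_lt hc) (not_le.2 (lt_of_le_of_ne h (Ne.symm this))))]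

lemma jumpFc_eq_of_mem (hinj : Function.Injective q) {i₀ : ℕ+} {x : ℝ} (h : q i₀ = x) :
    jumpFc q x = jumpF q x + w i₀ := by
  classical
  rw [jumpF_def, jumpFc_def]
  have hpt : ∀ i : ℕ+, (if q i ≤ x then w i else 0)
      = (if q i < x then w i else 0) + (if i = i₀ then w i₀ else 0) := by
    intro i
    rcases eq_or_ne i i₀ with rfl | hne
    · rw [if_pos rfl, if_pos h.le, if_neg (by rw [h]; exact lt_irrefl x), zero_add]
    · have hqne : q i ≠ x := fun hc => hne (hinj (by rw [hc, h]))
      rw [if_neg hne, add_zero]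
      rcases lt_or_ge (q i) x with h' | h'
      · rw [if_pos h'.le, if_pos h']
      · rw [if_neg (fun hc => hqne (le_antisymm hc h')),
          if_neg (fun hc => absurd h' (not_le.2 hc))]
  rw [tsum_congr hpt]
  rw [Summable.tsum_add (summable_ite _) ⟨w i₀, hasSum_ite_eq i₀ (w i₀)⟩]
  congr 1
  exact tsum_ite_eq i₀ (fun _ => w i₀)


noncomputable def EE (n : ℕ) (G : Fin (n + 1) → ℝ → ℝ) (r : ℕ) (x t : ℝ) : ℝ :=
  ∑ j : Fin (n + 1), (Nat.descFactorial ((j : ℕ) + 1) r : ℝ) * G j x * t ^ ((j : ℕ) + 1 - r)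

lemma EE_hasDerivAt (n : ℕ) (G : Fin (n + 1) → ℝ → ℝ) (r : ℕ) (x t : ℝ) :
    HasDerivAt (fun t => EE n G r x t) (EE n G (r + 1) x t) t := by
  unfold EE
  apply HasDerivAt.fun_sum
  intro j _
  have h := (hasDerivAt_pow ((j : ℕ) + 1 - r) t).const_mul
    ((Nat.descFactorial ((j : ℕ) + 1) r : ℝ) * G j x)
  convert h using 1
  case e'_4 => rfl
  rw [Nat.descFactorial_succ]
  have he : (j : ℕ) + 1 - (r + 1) = (j : ℕ) + 1 - r - 1 := by omega
  rw [he]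
  push_cast
  ring

lemma EE_zero (n : ℕ) (G : Fin (n + 1) → ℝ → ℝ) (x t : ℝ) :
    EE n G 0 x t = ∑ j : Fin (n + 1), G j x * t ^ ((j : ℕ) + 1) := by
  unfold EE
  apply Finset.sum_congr rfl
  intro j _
  rw [Nat.descFactorial_zero]
  push_cast
  ring

lemma EE_top (n : ℕ) (G : Fin (n + 1) → ℝ → ℝ) (x t : ℝ) :
    EE n G (n + 1) x t = (Nat.factorial (n + 1) : ℝ) * G (Fin.last n) x := by
  unfold EE
  rw [Finset.sum_eq_single (Fin.last n)]
  · rw [Fin.val_last, Nat.descFactorial_self, Nat.sub_self, pow_zero, mul_one]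
  · intro j _ hj
    have hlt : (j : ℕ) < n := by
      rcases lt_or_eq_of_le (Nat.lt_succ_iff.mp j.isLt) with h | h
      · exact h
      · exact absurd (Fin.ext h : j = Fin.last n) hj
    rw [Nat.descFactorial_eq_zero_iff_lt.mpr (by omega), Nat.cast_zero, zero_mul, zero_mul]
  · intro h
    exact absurd (Finset.mem_univ _) h

lemma EE_tendsto (n : ℕ) (G : Fin (n + 1) → ℝ → ℝ) (r : ℕ) {x₀ t₀ : ℝ}
    (hG : ∀ j : Fin (n + 1), ContinuousAt (G j) x₀)
    {u v : ℕ → ℝ} (hu : Tendsto u atTop (𝓝 x₀)) (hv : Tendsto v atTop (𝓝 t₀)) :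
    Tendsto (fun m => EE n G r (u m) (v m)) atTop (𝓝 (EE n G r x₀ t₀)) := by
  unfold EE
  apply tendsto_finset_sum
  intro j _
  exact (tendsto_const_nhds.mul (((hG j).tendsto).comp hu)).mul (hv.pow _)


lemma exists_big {q : ℕ+ → ℝ}
    (hq_surj : ∀ r : ℚ, (r : ℝ) ∈ Set.Ioo (0 : ℝ) 1 → ∃ i, q i = (r : ℝ))
    {u v : ℝ} (hu0 : 0 ≤ u) (huv : u < v) (hv1 : v ≤ 1) (m : ℕ) :
    ∃ i : ℕ+, q i ∈ Set.Ioo u v ∧ m < (i : ℕ) := by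
  classical
  have hS : {i : ℕ+ | q i ∈ Set.Ioo u v}.Infinite := by
    obtain ⟨r1, hr1⟩ := exists_rat_btwn huv
    obtain ⟨r2, hr2⟩ := exists_rat_btwn hr1.2
    have hr12 : r1 < r2 := by exact_mod_cast hr2.1
    haveI : Infinite ↥(Set.Ioo r1 r2) := Set.Ioo.infinite hr12
    have hmem : ∀ s : ↥(Set.Ioo r1 r2), ((s : ℚ) : ℝ) ∈ Set.Ioo (0:ℝ) 1 := by
      rintro ⟨s, hs⟩
      have h1 : (r1 : ℝ) < s := by exact_mod_cast hs.1
      have h2 : (s : ℝ) < r2 := by exact_mod_cast hs.2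
      constructor
      · calc (0:ℝ) ≤ u := hu0
          _ < r1 := hr1.1
          _ < s := h1
      · calc (s:ℝ) < r2 := h2
          _ < v := hr2.2
          _ ≤ 1 := hv1
    set f : ↥(Set.Ioo r1 r2) → ℕ+ := fun s => Classical.choose (hq_surj s (hmem s)) with hf
    have hfq : ∀ s, q (f s) = ((s : ℚ) : ℝ) := fun s => Classical.choose_spec (hq_surj s (hmem s))
    apply Set.infinite_of_injective_forall_mem (f := f)
    · intro s t hst
      have : ((s : ℚ) : ℝ) = ((t : ℚ) : ℝ) := by rw [← hfq s, ← hfq t, hst]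
      exact Subtype.ext (by exact_mod_cast this)
    · intro s
      rw [Set.mem_setOf_eq, hfq s]
      have h1 : (r1 : ℝ) < (s : ℚ) := by exact_mod_cast s.2.1
      have h2 : ((s : ℚ) : ℝ) < r2 := by exact_mod_cast s.2.2
      exact ⟨lt_trans hr1.1 h1, lt_trans h2 hr2.2⟩
  obtain ⟨i, hi, hgt⟩ := hS.exists_gt ⟨m + 1, Nat.succ_pos m⟩
  refine ⟨i, hi, ?_⟩
  have h1 : ((⟨m + 1, Nat.succ_pos m⟩ : ℕ+) : ℕ) < (i : ℕ) := hgt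
  have h2 : ((⟨m + 1, Nat.succ_pos m⟩ : ℕ+) : ℕ) = m + 1 := rfl
  omega
end Stmt13Aux

open Stmt13Aux

/-- If `G₁, …, G_k` are continuous on `[0,1]`, analytic on `(0,1)`, `G_k` not identically
zero, then `g = Σ_{j=1}^k G_j ⬝ f^j` has a dense set of jump discontinuities
(here `k = n + 1 ≥ 1` and indices are shifted so `G j` carries the power `j + 1`). -/
theorem stmt13 (q : ℕ+ → ℝ)
    (hq_mem : ∀ i, q i ∈ Set.Ioo (0 : ℝ) 1 ∧ ∃ r : ℚ, (r : ℝ) = q i)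
    (hq_inj : Function.Injective q)
    (hq_surj : ∀ r : ℚ, (r : ℝ) ∈ Set.Ioo (0 : ℝ) 1 → ∃ i, q i = (r : ℝ))
    (n : ℕ) (G : Fin (n + 1) → ℝ → ℝ)
    (hGcont : ∀ j, ContinuousOn (G j) (Set.Icc 0 1))
    (hGan : ∀ j, ∀ x ∈ Set.Ioo (0 : ℝ) 1, AnalyticAt ℝ (G j) x)
    (hGtop : ∃ x ∈ Set.Icc (0 : ℝ) 1, G (Fin.last n) x ≠ 0) :
    ∀ a b : ℝ, 0 ≤ a → a < b → b ≤ 1 →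
      ∃ x ∈ Set.Ioo a b,
        HasJumpAt (fun y => ∑ j : Fin (n + 1), G j y * jumpF q y ^ ((j : ℕ) + 1)) x := by
  intro a b ha hab hb
  classical
  by_contra hcon
  push_neg at hcon
  have hsubab : Ioo a b ⊆ Ioo (0:ℝ) 1 :=
    fun x hx => ⟨lt_of_le_of_lt ha hx.1, lt_of_lt_of_le hx.2 hb⟩
  -- find a point of `Ioo a b` where the top coefficient does not vanish
  have hx0 : ∃ x₀ ∈ Ioo a b, G (Fin.last n) x₀ ≠ 0 := by
    by_contra h
    push_neg at h
    obtain ⟨z, hz, hzne⟩ := hGtop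
    apply hzne
    have han : AnalyticOnNhd ℝ (G (Fin.last n)) (Ioo 0 1) := fun x hx => hGan _ x hx
    have hmid : (a + b) / 2 ∈ Ioo a b := ⟨by linarith, by linarith⟩
    have hev : G (Fin.last n) =ᶠ[𝓝 ((a + b) / 2)] 0 := by
      filter_upwards [Ioo_mem_nhds hmid.1 hmid.2] with y hy
      exact h y hy
    have hzero : EqOn (G (Fin.last n)) 0 (Ioo 0 1) :=
      han.eqOn_zero_of_preconnected_of_eventuallyEq_zero isPreconnected_Ioo (hsubab hmid) hev
    have hcl : z ∈ closure (Ioo (0:ℝ) 1) := by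
      rw [closure_Ioo (by norm_num : (0:ℝ) ≠ 1)]; exact hz
    haveI hnb : (𝓝[Ioo (0:ℝ) 1] z).NeBot := mem_closure_iff_nhdsWithin_neBot.1 hcl
    have h1 : Tendsto (G (Fin.last n)) (𝓝[Ioo (0:ℝ) 1] z) (𝓝 (G (Fin.last n) z)) :=
      (hGcont _ z hz).mono Ioo_subset_Icc_self
    have h2 : Tendsto (G (Fin.last n)) (𝓝[Ioo (0:ℝ) 1] z) (𝓝 0) := by
      apply Tendsto.congr' _ tendsto_const_nhds
      filter_upwards [self_mem_nhdsWithin] with y hy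
      exact (hzero hy).symm
    exact tendsto_nhds_unique h1 h2
  obtain ⟨x₀, hx₀ab, hx₀ne⟩ := hx0
  have hx₀01 : x₀ ∈ Ioo (0:ℝ) 1 := hsubab hx₀ab
  have hcontat : ContinuousAt (G (Fin.last n)) x₀ :=
    (hGcont _).continuousAt (Icc_mem_nhds hx₀01.1 hx₀01.2)
  have hevne : ∀ᶠ y in 𝓝 x₀, G (Fin.last n) y ≠ 0 ∧ y ∈ Ioo a b :=
    (hcontat.eventually_ne hx₀ne).and (Ioo_mem_nhds hx₀ab.1 hx₀ab.2)
  obtain ⟨l, u', hmem0, hsub0⟩ := mem_nhds_iff_exists_Ioo_subset.1 hevne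
  set A := max a l with hA
  set B := min b u' with hB
  have hxAB : x₀ ∈ Ioo A B := ⟨max_lt hx₀ab.1 hmem0.1, lt_min hx₀ab.2 hmem0.2⟩
  have hIsub : Ioo A B ⊆ Ioo a b := fun y hy =>
    ⟨lt_of_le_of_lt (le_max_left a l) hy.1, lt_of_lt_of_le hy.2 (min_le_left b u')⟩
  have hIsub' : Ioo A B ⊆ Ioo l u' := fun y hy =>
    ⟨lt_of_le_of_lt (le_max_right a l) hy.1, lt_of_lt_of_le hy.2 (min_le_right b u')⟩
  have hGne : ∀ y ∈ Ioo A B, G (Fin.last n) y ≠ 0 := fun y hy => (hsub0 (hIsub' hy)).1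
  have hA0 : 0 ≤ A := le_trans ha (le_max_left a l)
  have hB1 : B ≤ 1 := le_trans (min_le_left b u') hb
  have hAB : A < B := lt_trans hxAB.1 hxAB.2
  have hIoo01 : Ioo A B ⊆ Ioo (0:ℝ) 1 := fun y hy => hsubab (hIsub hy)
  have hGC : ∀ y ∈ Ioo (0:ℝ) 1, ∀ j, ContinuousAt (G j) y :=
    fun y hy j => (hGcont j).continuousAt (Icc_mem_nhds hy.1 hy.2)
  have hnotrange : ∀ {y : ℝ}, Irrational y → y ∉ range q := by
    rintro y hy ⟨i, rfl⟩
    obtain ⟨r, hr⟩ := (hq_mem i).2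
    exact hy ⟨r, hr⟩
  -- one-sided limits of `g`
  have hgL : ∀ x ∈ Ioo (0:ℝ) 1,
      Tendsto (fun y => ∑ j : Fin (n + 1), G j y * jumpF q y ^ ((j : ℕ) + 1))
        (𝓝[<] x) (𝓝 (EE n G 0 x (jumpF q x))) := by
    intro x hx
    rw [EE_zero]
    apply tendsto_finset_sum
    intro j _
    exact (((hGC x hx j).tendsto).mono_left nhdsWithin_le_nhds).mul ((tendsto_left x).pow _)
  have hgR : ∀ x ∈ Ioo (0:ℝ) 1,
      Tendsto (fun y => ∑ j : Fin (n + 1), G j y * jumpF q y ^ ((j : ℕ) + 1))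
        (𝓝[>] x) (𝓝 (EE n G 0 x (jumpFc q x))) := by
    intro x hx
    rw [EE_zero]
    apply tendsto_finset_sum
    intro j _
    exact (((hGC x hx j).tendsto).mono_left nhdsWithin_le_nhds).mul ((tendsto_right x).pow _)
  -- base case: the jump of `g` vanishes at every rational point of `Ioo A B`
  have hS0 : ∀ i : ℕ+, q i ∈ Ioo A B →
      EE n G 0 (q i) (jumpF q (q i) + w i) = EE n G 0 (q i) (jumpF q (q i)) := by
    intro i hi
    have hx01 : q i ∈ Ioo (0:ℝ) 1 := (hq_mem i).1
    have hR := hgR (q i) hx01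
    rw [jumpFc_eq_of_mem hq_inj rfl] at hR
    by_contra hne
    exact hcon (q i) (hIsub hi) ⟨_, _, hgL (q i) hx01, hR, fun h => hne h.symm⟩
  -- step 1 : vanishing jumps of `EE r` imply `EE (r+1)` vanishes at irrational points
  have step1 : ∀ r : ℕ,
      (∀ i : ℕ+, q i ∈ Ioo A B →
        EE n G r (q i) (jumpF q (q i) + w i) = EE n G r (q i) (jumpF q (q i))) →
      ∀ x₁ ∈ Ioo A B, x₁ ∉ range q → EE n G (r + 1) x₁ (jumpF q x₁) = 0 := by
    intro r hSr x₁ hx₁ hx₁r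
    have hx₁01 : x₁ ∈ Ioo (0:ℝ) 1 := hIoo01 hx₁
    have hseq : ∀ m : ℕ, ∃ i : ℕ+, q i ∈ Ioo x₁ (min B (x₁ + 1 / ((m:ℝ) + 1))) ∧ m < (i : ℕ) := by
      intro m
      apply exists_big hq_surj (le_of_lt hx₁01.1)
      · exact lt_min hx₁.2 (lt_add_of_pos_right _ (by positivity))
      · exact le_trans (min_le_left _ _) hB1
    choose iseq hmemi hbig using hseq
    set y : ℕ → ℝ := fun m => q (iseq m) with hy
    have hyI : ∀ m, y m ∈ Ioo A B := fun m =>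
      ⟨lt_trans hx₁.1 (hmemi m).1, lt_of_lt_of_le (hmemi m).2 (min_le_left _ _)⟩
    have hupper : Tendsto (fun m : ℕ => x₁ + 1 / ((m:ℝ) + 1)) atTop (𝓝 x₁) := by
      have := tendsto_const_nhds (x := x₁) (f := atTop (α := ℕ)) |>.add
        tendsto_one_div_add_atTop_nhds_zero_nat
      simpa using this
    have hyn : Tendsto y atTop (𝓝 x₁) := by
      apply tendsto_of_tendsto_of_tendsto_of_le_of_le tendsto_const_nhds hupper
      · exact fun m => (hmemi m).1.le
      · exact fun m => le_of_lt (lt_of_lt_of_le (hmemi m).2 (min_le_right _ _))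
    have hyx : Tendsto y atTop (𝓝[>] x₁) := by
      rw [tendsto_nhdsWithin_iff]
      exact ⟨hyn, Eventually.of_forall (fun m => (hmemi m).1)⟩
    set eps : ℕ → ℝ := fun m => w (iseq m) with heps
    have heps0 : Tendsto eps atTop (𝓝 0) := by
      apply tendsto_of_tendsto_of_tendsto_of_le_of_le tendsto_const_nhds
        (tendsto_pow_atTop_nhds_zero_of_lt_one (by norm_num : (0:ℝ) ≤ 1/2) (by norm_num))
      · exact fun m => (w_pos _).le
      · intro m
        exact pow_le_pow_of_le_one (by norm_num) (by norm_num) (le_of_lt (hbig m))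
    set c : ℕ → ℝ := fun m => jumpF q (y m) with hc'
    have hc : Tendsto c atTop (𝓝 (jumpF q x₁)) := by
      have h := (tendsto_right (q := q) x₁).comp hyx
      rw [jumpFc_eq_of_not_mem hx₁r] at h
      exact h
    have hrolle : ∀ m : ℕ, ∃ ξ ∈ Ioo (c m) (c m + eps m), EE n G (r + 1) (y m) ξ = 0 := by
      intro m
      have hlt : c m < c m + eps m := lt_add_of_pos_right _ (w_pos _)
      have heq : EE n G r (y m) (c m) = EE n G r (y m) (c m + eps m) :=
        (hSr (iseq m) (hyI m)).symm
      have hcont : ContinuousOn (fun t => EE n G r (y m) t) (Icc (c m) (c m + eps m)) := by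
        apply Continuous.continuousOn
        rw [continuous_iff_continuousAt]
        exact fun t => (EE_hasDerivAt n G r (y m) t).continuousAt
      exact exists_hasDerivAt_eq_zero hlt hcont heq (fun t _ => EE_hasDerivAt n G r (y m) t)
    choose ξ hξmem hξ0 using hrolle
    have hξ : Tendsto ξ atTop (𝓝 (jumpF q x₁)) := by
      apply tendsto_of_tendsto_of_tendsto_of_le_of_le hc (by simpa using hc.add heps0)
      · exact fun m => (hξmem m).1.le
      · exact fun m => (hξmem m).2.le
    have h1 : Tendsto (fun m => EE n G (r + 1) (y m) (ξ m)) atTop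
        (𝓝 (EE n G (r + 1) x₁ (jumpF q x₁))) :=
      EE_tendsto n G (r + 1) (hGC x₁ hx₁01) hyn hξ
    have h2 : Tendsto (fun m => EE n G (r + 1) (y m) (ξ m)) atTop (𝓝 0) :=
      tendsto_const_nhds.congr (fun m => (hξ0 m).symm)
    exact tendsto_nhds_unique h1 h2
  -- step 2 : vanishing at irrational points propagates to rational points from both sides
  have step2 : ∀ r : ℕ,
      (∀ x₁ ∈ Ioo A B, x₁ ∉ range q → EE n G r x₁ (jumpF q x₁) = 0) →
      ∀ i : ℕ+, q i ∈ Ioo A B →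
        EE n G r (q i) (jumpF q (q i)) = 0 ∧ EE n G r (q i) (jumpF q (q i) + w i) = 0 := by
    intro r hT i hi
    have hq01 : q i ∈ Ioo (0:ℝ) 1 := (hq_mem i).1
    constructor
    · -- approach from the left by irrationals
      have hseq : ∀ m : ℕ, ∃ z : ℝ,
          Irrational z ∧ max A (q i - 1 / ((m:ℝ) + 1)) < z ∧ z < q i := by
        intro m
        exact exists_irrational_btwn (max_lt hi.1 (sub_lt_self _ (by positivity)))
      choose z hz1 hz2 hz3 using hseq
      have hzI : ∀ m, z m ∈ Ioo A B := fun m =>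
        ⟨lt_of_le_of_lt (le_max_left _ _) (hz2 m), lt_trans (hz3 m) hi.2⟩
      have hlower : Tendsto (fun m : ℕ => q i - 1 / ((m:ℝ) + 1)) atTop (𝓝 (q i)) := by
        have := tendsto_const_nhds (x := q i) (f := atTop (α := ℕ)) |>.sub
          tendsto_one_div_add_atTop_nhds_zero_nat
        simpa using this
      have hzn : Tendsto z atTop (𝓝 (q i)) := by
        apply tendsto_of_tendsto_of_tendsto_of_le_of_le hlower tendsto_const_nhds
        · exact fun m => le_of_lt (lt_of_le_of_lt (le_max_right _ _) (hz2 m))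
        · exact fun m => (hz3 m).le
      have hzx : Tendsto z atTop (𝓝[<] q i) := by
        rw [tendsto_nhdsWithin_iff]
        exact ⟨hzn, Eventually.of_forall (fun m => hz3 m)⟩
      have hfz : Tendsto (fun m => jumpF q (z m)) atTop (𝓝 (jumpF q (q i))) :=
        (tendsto_left (q i)).comp hzx
      have h1 : Tendsto (fun m => EE n G r (z m) (jumpF q (z m))) atTop
          (𝓝 (EE n G r (q i) (jumpF q (q i)))) :=
        EE_tendsto n G r (hGC _ hq01) hzn hfz
      have h2 : Tendsto (fun m => EE n G r (z m) (jumpF q (z m))) atTop (𝓝 0) :=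
        tendsto_const_nhds.congr (fun m => (hT (z m) (hzI m) (hnotrange (hz1 m))).symm)
      exact tendsto_nhds_unique h1 h2
    · -- approach from the right by irrationals
      have hseq : ∀ m : ℕ, ∃ z : ℝ,
          Irrational z ∧ q i < z ∧ z < min B (q i + 1 / ((m:ℝ) + 1)) := by
        intro m
        exact exists_irrational_btwn (lt_min hi.2 (lt_add_of_pos_right _ (by positivity)))
      choose z hz1 hz2 hz3 using hseq
      have hzI : ∀ m, z m ∈ Ioo A B := fun m =>
        ⟨lt_trans hi.1 (hz2 m), lt_of_lt_of_le (hz3 m) (min_le_left _ _)⟩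
      have hupper : Tendsto (fun m : ℕ => q i + 1 / ((m:ℝ) + 1)) atTop (𝓝 (q i)) := by
        have := tendsto_const_nhds (x := q i) (f := atTop (α := ℕ)) |>.add
          tendsto_one_div_add_atTop_nhds_zero_nat
        simpa using this
      have hzn : Tendsto z atTop (𝓝 (q i)) := by
        apply tendsto_of_tendsto_of_tendsto_of_le_of_le tendsto_const_nhds hupper
        · exact fun m => (hz2 m).le
        · exact fun m => le_of_lt (lt_of_lt_of_le (hz3 m) (min_le_right _ _))
      have hzx : Tendsto z atTop (𝓝[>] q i) := by
        rw [tendsto_nhdsWithin_iff]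
        exact ⟨hzn, Eventually.of_forall (fun m => hz2 m)⟩
      have hfz : Tendsto (fun m => jumpF q (z m)) atTop (𝓝 (jumpF q (q i) + w i)) := by
        have h := (tendsto_right (q := q) (q i)).comp hzx
        rwa [jumpFc_eq_of_mem hq_inj rfl] at h
      have h1 : Tendsto (fun m => EE n G r (z m) (jumpF q (z m))) atTop
          (𝓝 (EE n G r (q i) (jumpF q (q i) + w i))) :=
        EE_tendsto n G r (hGC _ hq01) hzn hfz
      have h2 : Tendsto (fun m => EE n G r (z m) (jumpF q (z m))) atTop (𝓝 0) :=
        tendsto_const_nhds.congr (fun m => (hT (z m) (hzI m) (hnotrange (hz1 m))).symm)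
      exact tendsto_nhds_unique h1 h2
  -- the induction
  have hSall : ∀ r : ℕ, ∀ i : ℕ+, q i ∈ Ioo A B →
      EE n G r (q i) (jumpF q (q i) + w i) = EE n G r (q i) (jumpF q (q i)) := by
    intro r
    induction r with
    | zero => exact hS0
    | succ r ih =>
      intro i hi
      obtain ⟨h1, h2⟩ := step2 (r + 1) (step1 r ih) i hi
      rw [h1, h2]
  -- conclusion
  obtain ⟨ζ, hζirr, hζ1, hζ2⟩ := exists_irrational_btwn hAB
  have hζI : ζ ∈ Ioo A B := ⟨hζ1, hζ2⟩
  have hfin := step1 n (hSall n) ζ hζI (hnotrange hζirr)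
  rw [EE_top] at hfin
  have hfac : (Nat.factorial (n + 1) : ℝ) ≠ 0 :=
    Nat.cast_ne_zero.2 (Nat.factorial_ne_zero _)
  exact hGne ζ hζI (by
    rcases mul_eq_zero.1 hfin with h | h
    · exact absurd h hfac
    · exact h)
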